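/- arXiv:1810.06781 — 4 statements merged into one kernel-verified Lean document; each statement's English description precedes it below -/
import Mathlib

section
/- Let ξ be a complex number, let X_1,…,X_n be complex numbers, and let C_1, C_2, k_Lip be positive reals such that: (i) C_1 ≤ |(1/n)∑_{j=1}^n 1/(ξ−X_j)| ≤ C_2; (ii) the function z ↦ (1/n)∑_{j=1}^n 1/(z−X_j) is Lipschitz continuous with constant k_Lip on the set {z ∈ ℂ : |z−ξ| ≤ 2/(C_1 n)}; (iii) min_{1≤j≤n} |ξ−X_j| > 3/(C_1 n). Then for any real C > 8(1+2C_2²)/C_1³ and any natural number n > 4C_2·max{1/C_1, C(k_Lip+1)}, the polynomial p_n(z) := (z−ξ)∏_{j=1}^n (z−X_j) has exactly one critical point w (i.e. zero of p_n′) with |w−ξ| ≤ 3/(2C_1 n), and this w satisfies |w − ξ + (1/(n+1)) · 1/((1/n)∑_{j=1}^n 1/(ξ−X_j))| < C(k_Lip+1)/n². -/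
/-!
Write `σ z = n⁻¹ ∑ j, (z - X_j)⁻¹` and `S = n σ`. A point `z ≠ X_j` is a critical point of
`(z - ξ) ∏ j, (z - X_j)` iff `1 + (z - ξ) S z = 0`, i.e. iff it is a fixed point of
`T z = ξ - (S z)⁻¹`. On the ball of radius `r = 3 / (2 C₁ n)` about `ξ` the Lipschitz bound keeps
`|σ| ≥ 3 C₁ / 4`, so `T` maps the ball into itself and is a contraction with constant
`n k_Lip / (3 C₁ n / 4)² < 1`; Banach's fixed point theorem gives the unique critical point `w`.
Finally `w - ξ = -(n σ w)⁻¹` differs from `-((n + 1) σ ξ)⁻¹` by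
`(n (σ w - σ ξ) - σ ξ) / (n (n + 1) σ w σ ξ)`, and the numerator is `O(k_Lip + 1)` since
`|w - ξ| ≤ r = O(1 / n)`.
-/

open Polynomial Metric
open scoped NNReal

section CriticalPoint

variable {K ι : Type*} [Field K] [Fintype ι]

theorem Polynomial.eval_derivative_prod_X_sub_C (x : ι → K) {z : K} (hz : ∀ j, z ≠ x j) :
    (derivative (∏ j, (X - C (x j)))).eval z = (∏ j, (z - x j)) * ∑ j, (z - x j)⁻¹ := by
  classical
  simp only [derivative_prod_finset, derivative_X_sub_C, mul_one, eval_finsetSum, eval_prod,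
    eval_sub, eval_X, eval_C, Finset.mul_sum]
  refine Finset.sum_congr rfl fun j _ => ?_
  rw [← Finset.mul_prod_erase _ _ (Finset.mem_univ j), mul_comm (z - x j),
    mul_inv_cancel_right₀ (sub_ne_zero.2 (hz j))]

theorem Polynomial.isRoot_derivative_X_sub_C_mul_prod_iff (ξ : K) (x : ι → K) {z : K}
    (hz : ∀ j, z ≠ x j) :
    (derivative ((X - C ξ) * ∏ j, (X - C (x j)))).IsRoot z ↔
      1 + (z - ξ) * ∑ j, (z - x j)⁻¹ = 0 := by
  have hprod : ∏ j, (z - x j) ≠ 0 := Finset.prod_ne_zero_iff.2 fun j _ => sub_ne_zero.2 (hz j)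
  have heval : (derivative ((X - C ξ) * ∏ j, (X - C (x j)))).eval z =
      (∏ j, (z - x j)) * (1 + (z - ξ) * ∑ j, (z - x j)⁻¹) := by
    rw [derivative_mul, derivative_X_sub_C, eval_add, eval_mul, eval_mul,
      eval_derivative_prod_X_sub_C x hz, eval_prod]
    simp only [eval_one, one_mul, eval_sub, eval_X, eval_C]
    ring
  rw [IsRoot, heval, mul_eq_zero, or_iff_right hprod]

theorem one_add_sub_mul_eq_zero_iff {w ξ c : K} (hc : c ≠ 0) :
    1 + (w - ξ) * c = 0 ↔ ξ - c⁻¹ = w := by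
  constructor
  · intro h
    field_simp
    linear_combination -h
  · rintro rfl
    field_simp
    ring

theorem Polynomial.isRoot_derivative_X_sub_C_mul_prod_iff_sub_inv_eq (ξ : K) (x : ι → K)
    {z : K} (hz : ∀ j, z ≠ x j) :
    (derivative ((X - C ξ) * ∏ j, (X - C (x j)))).IsRoot z ↔
      ∑ j, (z - x j)⁻¹ ≠ 0 ∧ ξ - (∑ j, (z - x j)⁻¹)⁻¹ = z := by
  rw [isRoot_derivative_X_sub_C_mul_prod_iff ξ x hz]
  by_cases hS : ∑ j, (z - x j)⁻¹ = 0
  · simp [hS]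
  · rw [one_add_sub_mul_eq_zero_iff hS, and_iff_right hS]

end CriticalPoint

theorem LipschitzOnWith.dist_le_mul_radius {α β : Type*} [PseudoMetricSpace α]
    [PseudoMetricSpace β] {f : α → β} {K : ℝ≥0} {ξ z : α} {r : ℝ}
    (hf : LipschitzOnWith K f (closedBall ξ r)) (hz : z ∈ closedBall ξ r) :
    dist (f z) (f ξ) ≤ K * r :=
  (hf.dist_le_mul z hz ξ (mem_closedBall_self (dist_nonneg.trans hz))).trans (by gcongr; exact hz)

theorem LipschitzOnWith.le_norm_of_add_mul_le {E F : Type*} [SeminormedAddCommGroup E]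
    [SeminormedAddCommGroup F] {f : E → F} {K : ℝ≥0} {ξ : E} {r μ : ℝ}
    (hf : LipschitzOnWith K f (closedBall ξ r)) (h : μ + K * r ≤ ‖f ξ‖) :
    ∀ z ∈ closedBall ξ r, μ ≤ ‖f z‖ := fun z hz => by
  have hdist := hf.dist_le_mul_radius hz
  rw [dist_eq_norm] at hdist
  linarith [norm_sub_norm_le (f ξ) (f z), norm_sub_rev (f ξ) (f z)]

theorem LipschitzOnWith.of_inv_mul {α 𝕜 : Type*} [PseudoMetricSpace α] [NormedField 𝕜]
    {g : α → 𝕜} {c : 𝕜} {K : ℝ≥0} {s : Set α} (hc : c ≠ 0)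
    (hg : LipschitzOnWith K (fun z => c⁻¹ * g z) s) : LipschitzOnWith (‖c‖₊ * K) g s := by
  simpa only [Function.comp_def, smul_eq_mul, mul_inv_cancel_left₀ hc] using
    (lipschitzWith_smul c).comp_lipschitzOnWith hg

section FixedPoint

variable {𝕜 : Type*} [NormedField 𝕜] {f : 𝕜 → 𝕜} {ξ : 𝕜} {r m : ℝ} {L : ℝ≥0}

theorem mapsTo_sub_inv_closedBall (hm : 0 < m) (hfm : ∀ z ∈ closedBall ξ r, m ≤ ‖f z‖)
    (hmr : m⁻¹ ≤ r) :
    Set.MapsTo (fun z => ξ - (f z)⁻¹) (closedBall ξ r) (closedBall ξ r) := fun z hz => by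
  rw [mem_closedBall, dist_eq_norm, sub_sub_cancel_left, norm_neg, norm_inv]
  exact (inv_anti₀ hm (hfm z hz)).trans hmr

theorem lipschitzOnWith_sub_inv (hf : LipschitzOnWith L f (closedBall ξ r)) (hm : 0 < m)
    (hfm : ∀ z ∈ closedBall ξ r, m ≤ ‖f z‖) :
    LipschitzOnWith (Real.toNNReal (L / m ^ 2)) (fun z => ξ - (f z)⁻¹) (closedBall ξ r) := by
  refine LipschitzOnWith.of_dist_le_mul fun z hz w hw => ?_
  have hz0 : f z ≠ 0 := norm_pos_iff.1 (hm.trans_le (hfm z hz))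
  have hw0 : f w ≠ 0 := norm_pos_iff.1 (hm.trans_le (hfm w hw))
  rw [Real.coe_toNNReal _ (by positivity), dist_eq_norm, sub_sub_sub_cancel_left,
    inv_sub_inv' hw0 hz0, norm_mul, norm_mul, norm_inv, norm_inv, ← dist_eq_norm]
  calc ‖f w‖⁻¹ * dist (f z) (f w) * ‖f z‖⁻¹ = dist (f z) (f w) / (‖f w‖ * ‖f z‖) := by
        field_simp
    _ ≤ L * dist z w / (m * m) := by
        gcongr
        exacts [hf.dist_le_mul z hz w hw, hfm w hw, hfm z hz]
    _ = L / m ^ 2 * dist z w := by ring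

variable [CompleteSpace 𝕜]

theorem existsUnique_mem_closedBall_sub_inv_eq (hf : LipschitzOnWith L f (closedBall ξ r))
    (hm : 0 < m) (hfm : ∀ z ∈ closedBall ξ r, m ≤ ‖f z‖) (hmr : m⁻¹ ≤ r) (hLm : L < m ^ 2) :
    ∃! w, w ∈ closedBall ξ r ∧ ξ - (f w)⁻¹ = w := by
  have hmaps := mapsTo_sub_inv_closedBall hm hfm hmr
  have hcontr : ContractingWith (Real.toNNReal (L / m ^ 2)) (hmaps.restrict _ _ _) := by
    refine ⟨?_, hmaps.lipschitzOnWith_iff_restrict.1 (lipschitzOnWith_sub_inv hf hm hfm)⟩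
    rwa [Real.toNNReal_lt_one, div_lt_one (by positivity)]
  obtain ⟨w, hw, hTw, -⟩ := hcontr.exists_fixedPoint' isClosed_closedBall.isComplete hmaps
    (mem_closedBall_self ((inv_pos.2 hm).le.trans hmr)) (edist_ne_top _ _)
  refine ⟨w, ⟨hw, hTw⟩, fun v ⟨hv, hTv⟩ => ?_⟩
  exact congrArg Subtype.val (hcontr.fixedPoint_unique' (x := ⟨v, hv⟩) (y := ⟨w, hw⟩)
    (Subtype.ext hTv) (Subtype.ext hTw))

theorem existsUnique_mem_closedBall_isRoot_derivative {ι : Type*} [Fintype ι] {x : ι → 𝕜}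
    (hS : LipschitzOnWith L (fun z => ∑ j, (z - x j)⁻¹) (closedBall ξ r)) (hm : 0 < m)
    (hSm : ∀ z ∈ closedBall ξ r, m ≤ ‖∑ j, (z - x j)⁻¹‖) (hx : ∀ j, x j ∉ closedBall ξ r)
    (hmr : m⁻¹ ≤ r) (hLm : L < m ^ 2) :
    ∃! w, w ∈ closedBall ξ r ∧ (derivative ((X - C ξ) * ∏ j, (X - C (x j)))).IsRoot w := by
  refine (existsUnique_congr fun w => and_congr_right fun hw => ?_).2
    (existsUnique_mem_closedBall_sub_inv_eq hS hm hSm hmr hLm)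
  rw [isRoot_derivative_X_sub_C_mul_prod_iff_sub_inv_eq ξ x fun j h => hx j (h ▸ hw),
    and_iff_right (norm_pos_iff.1 (hm.trans_le (hSm w hw)))]

end FixedPoint

theorem norm_inv_succ_mul_inv_sub_inv_mul_lt {𝕜 : Type*} [RCLike 𝕜] {n : ℕ} (hn : n ≠ 0)
    {a b : 𝕜} {D : ℝ} (ha : a ≠ 0) (hb : b ≠ 0) (h : n * ‖a - b‖ + ‖b‖ < D * (‖a‖ * ‖b‖)) :
    ‖((n : 𝕜) + 1)⁻¹ * b⁻¹ - ((n : 𝕜) * a)⁻¹‖ < D / n ^ 2 := by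
  have hn' : (n : 𝕜) ≠ 0 := Nat.cast_ne_zero.2 hn
  have hn1 : (n : 𝕜) + 1 ≠ 0 := by exact_mod_cast n.succ_ne_zero
  have hab : 0 < ‖a‖ * ‖b‖ := by positivity
  have hD : 0 < D := pos_of_mul_pos_left ((by positivity : (0 : ℝ) ≤ _).trans_lt h) hab.le
  have key : ((n : 𝕜) + 1)⁻¹ * b⁻¹ - ((n : 𝕜) * a)⁻¹ =
      (n * (a - b) - b) / (n * (n + 1) * (a * b)) := by
    field_simp
    ring
  have hnorm : ‖(n : 𝕜) + 1‖ = n + 1 := by exact_mod_cast RCLike.norm_natCast (K := 𝕜) (n + 1)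
  calc ‖((n : 𝕜) + 1)⁻¹ * b⁻¹ - ((n : 𝕜) * a)⁻¹‖
      = ‖n * (a - b) - b‖ / (n * (n + 1) * (‖a‖ * ‖b‖)) := by
        rw [key, norm_div, norm_mul, norm_mul, norm_mul, hnorm, RCLike.norm_natCast]
    _ ≤ (n * ‖a - b‖ + ‖b‖) / (n * (n + 1) * (‖a‖ * ‖b‖)) := by
        gcongr
        refine (norm_sub_le _ _).trans_eq ?_
        rw [norm_mul, RCLike.norm_natCast]
    _ < D * (‖a‖ * ‖b‖) / (n * (n + 1) * (‖a‖ * ‖b‖)) := by gcongr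
    _ = D / (n * (n + 1)) := by field_simp
    _ ≤ D / n ^ 2 := by gcongr; nlinarith

section Constants

variable {N C₁ C₂ k C : ℝ}

theorem lipschitz_const_lt (hC₁ : 0 < C₁) (hC₁₂ : C₁ ≤ C₂) (hk : 0 ≤ k)
    (hC : 8 * (1 + 2 * C₂ ^ 2) / C₁ ^ 3 < C) (hN : 4 * C₂ * (C * (k + 1)) < N) :
    32 * k < N * C₁ ^ 2 := by
  rw [div_lt_iff₀ (by positivity)] at hC
  have hC0 : 0 < C :=
    pos_of_mul_pos_left ((by positivity : (0 : ℝ) < 8 * (1 + 2 * C₂ ^ 2)).trans hC) (by positivity)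
  nlinarith [mul_le_mul_of_nonneg_left hC₁₂ (by positivity : 0 ≤ 4 * C * (k + 1) * C₁ ^ 2),
    mul_lt_mul_of_pos_right hN (by positivity : 0 < C₁ ^ 2)]

theorem error_const_lt (hC₁ : 0 < C₁) (hC₁₂ : C₁ ≤ C₂) (hk : 0 ≤ k)
    (hC : 8 * (1 + 2 * C₂ ^ 2) / C₁ ^ 3 < C) :
    3 * k / (2 * C₁) + C₂ < C * (k + 1) * (3 * C₁ / 4 * C₁) := by
  rw [div_lt_iff₀ (by positivity)] at hC
  rw [div_add' _ _ _ (by positivity : 2 * C₁ ≠ 0), div_lt_iff₀ (by positivity)]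
  nlinarith [mul_lt_mul_of_pos_right hC (by positivity : 0 < k + 1),
    mul_le_mul_of_nonneg_left hC₁₂ (by linarith : 0 ≤ 2 * C₂)]

theorem ball_radius_bounds (hC₁ : 0 < C₁) (hN : 0 < N) (hkN : 32 * k < N * C₁ ^ 2) :
    3 / (2 * C₁ * N) ≤ 2 / (C₁ * N) ∧ 3 / (2 * C₁ * N) ≤ 3 / (C₁ * N) ∧
      3 * C₁ / 4 + k * (3 / (2 * C₁ * N)) ≤ C₁ ∧ (N * (3 * C₁ / 4))⁻¹ ≤ 3 / (2 * C₁ * N) ∧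
      N * k < (N * (3 * C₁ / 4)) ^ 2 := by
  refine ⟨?_, ?_, ?_, ?_, by nlinarith⟩
  · rw [div_le_div_iff₀ (by positivity) (by positivity)]; nlinarith
  · exact div_le_div_of_nonneg_left (by norm_num) (by positivity) (by nlinarith)
  · rw [← mul_div_assoc, div_add_div _ _ (by norm_num) (by positivity),
      div_le_iff₀ (by positivity)]
    nlinarith
  · rw [inv_eq_one_div, div_le_div_iff₀ (by positivity) (by positivity)]; nlinarith

theorem norm_inv_succ_mul_inv_sub_inv_mul_lt_of_le {𝕜 : Type*} [RCLike 𝕜] {n : ℕ} (hn : n ≠ 0)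
    {a b : 𝕜} (hC₁ : 0 < C₁) (hk : 0 ≤ k) (hC : 8 * (1 + 2 * C₂ ^ 2) / C₁ ^ 3 < C)
    (ha : 3 * C₁ / 4 ≤ ‖a‖) (hb : C₁ ≤ ‖b‖) (hb' : ‖b‖ ≤ C₂)
    (hab : ‖a - b‖ ≤ k * (3 / (2 * C₁ * n))) :
    ‖((n : 𝕜) + 1)⁻¹ * b⁻¹ - ((n : 𝕜) * a)⁻¹‖ < C * (k + 1) / n ^ 2 := by
  have hn0 : (0 : ℝ) < n := by positivity
  have hC0 : 0 ≤ C * (k + 1) :=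
    mul_nonneg ((by positivity : (0 : ℝ) ≤ 8 * (1 + 2 * C₂ ^ 2) / C₁ ^ 3).trans hC.le) (by linarith)
  refine norm_inv_succ_mul_inv_sub_inv_mul_lt hn (norm_pos_iff.1 (by linarith))
    (norm_pos_iff.1 (by linarith)) ?_
  calc n * ‖a - b‖ + ‖b‖ ≤ n * (k * (3 / (2 * C₁ * n))) + C₂ := by gcongr
    _ = 3 * k / (2 * C₁) + C₂ := by field_simp
    _ < C * (k + 1) * (3 * C₁ / 4 * C₁) := error_const_lt hC₁ (hb.trans hb') hk hC
    _ ≤ C * (k + 1) * (‖a‖ * ‖b‖) := by gcongr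

end Constants

theorem critical_point_near_deterministic_root_general
    (n : ℕ) (ξ : ℂ) (Xs : Fin n → ℂ) (C₁ C₂ kLip C : ℝ)
    (hC₁ : 0 < C₁) (hk : 0 < kLip)
    (hlow : C₁ ≤ ‖(n : ℂ)⁻¹ * ∑ j, (ξ - Xs j)⁻¹‖)
    (hupp : ‖(n : ℂ)⁻¹ * ∑ j, (ξ - Xs j)⁻¹‖ ≤ C₂)
    (hLip : LipschitzOnWith (Real.toNNReal kLip)
      (fun z : ℂ => (n : ℂ)⁻¹ * ∑ j, (z - Xs j)⁻¹)
      {z : ℂ | ‖z - ξ‖ ≤ 2 / (C₁ * n)})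
    (hmin : ∀ j, 3 / (C₁ * n) < ‖ξ - Xs j‖)
    (hC : 8 * (1 + 2 * C₂ ^ 2) / C₁ ^ 3 < C)
    (hn : 4 * C₂ * max (1 / C₁) (C * (kLip + 1)) < (n : ℝ)) :
    ∃ w : ℂ,
      ‖w - ξ‖ ≤ 3 / (2 * C₁ * n) ∧
      (Polynomial.derivative
        ((Polynomial.X - Polynomial.C ξ) *
          ∏ j, (Polynomial.X - Polynomial.C (Xs j)))).IsRoot w ∧
      (∀ w' : ℂ, ‖w' - ξ‖ ≤ 3 / (2 * C₁ * n) →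
        (Polynomial.derivative
          ((Polynomial.X - Polynomial.C ξ) *
            ∏ j, (Polynomial.X - Polynomial.C (Xs j)))).IsRoot w' → w' = w) ∧
      ‖w - ξ + ((n : ℂ) + 1)⁻¹ * ((n : ℂ)⁻¹ * ∑ j, (ξ - Xs j)⁻¹)⁻¹‖
        < C * (kLip + 1) / (n : ℝ) ^ 2 := by
  set σ : ℂ → ℂ := fun z => (n : ℂ)⁻¹ * ∑ j, (z - Xs j)⁻¹
  set r := 3 / (2 * C₁ * n)
  have hkn := lipschitz_const_lt hC₁ (hlow.trans hupp) hk.le hC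
    ((mul_le_mul_of_nonneg_left (le_max_right _ _) (by linarith)).trans_lt hn)
  have hn0 : (0 : ℝ) < n := by nlinarith
  have hnne : (n : ℂ) ≠ 0 := by exact_mod_cast hn0.ne'
  obtain ⟨hr₂, hr₃, hkr, hμr, hkμ⟩ := ball_radius_bounds hC₁ hn0 hkn
  have hσ : LipschitzOnWith (Real.toNNReal kLip) σ (closedBall ξ r) :=
    hLip.mono fun z hz => (mem_closedBall_iff_norm.1 hz).trans hr₂
  have hσlow := hσ.le_norm_of_add_mul_le (by rw [Real.coe_toNNReal _ hk.le]; exact hkr.trans hlow)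
  have hXs : ∀ j, Xs j ∉ closedBall ξ r := fun j hj =>
    (hmin j).not_ge (by rw [← dist_eq_norm]; exact (mem_closedBall'.1 hj).trans hr₃)
  have hS : ∀ z, ∑ j, (z - Xs j)⁻¹ = n * σ z := fun z => (mul_inv_cancel_left₀ hnne _).symm
  obtain ⟨w, ⟨hw, hroot⟩, huniq⟩ := existsUnique_mem_closedBall_isRoot_derivative
    (hσ.of_inv_mul hnne) (by positivity)
    (fun z hz => by rw [hS, norm_mul, Complex.norm_natCast]; gcongr; exact hσlow z hz) hXs hμr
    (by rwa [NNReal.coe_mul, coe_nnnorm, Complex.norm_natCast, Real.coe_toNNReal _ hk.le])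
  refine ⟨w, mem_closedBall_iff_norm.1 hw, hroot, fun v hv hv0 =>
    huniq v ⟨mem_closedBall_iff_norm.2 hv, hv0⟩, ?_⟩
  have hfix := ((isRoot_derivative_X_sub_C_mul_prod_iff_sub_inv_eq ξ Xs
    fun j h => hXs j (h ▸ hw)).1 hroot).2
  rw [hS] at hfix
  rw [show w - ξ = -((n : ℂ) * σ w)⁻¹ by linear_combination -hfix, neg_add_eq_sub]
  have hdist := hσ.dist_le_mul_radius hw
  rw [dist_eq_norm, Real.coe_toNNReal _ hk.le] at hdist
  exact norm_inv_succ_mul_inv_sub_inv_mul_lt_of_le (by exact_mod_cast hnne) hC₁ hk.le hC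
    (hσlow w hw) hlow hupp hdist

/-- Theorem `detLoc`: deterministic location of the unique critical point
near a root `ξ` of `p n (z) = (z - ξ) ∏ j, (z - Xs j)`. -/
theorem critical_point_near_deterministic_root
    (n : ℕ) (ξ : ℂ) (Xs : Fin n → ℂ) (C₁ C₂ kLip C : ℝ)
    (hC₁ : 0 < C₁) (hC₂ : 0 < C₂) (hk : 0 < kLip)
    (hlow : C₁ ≤ ‖(n : ℂ)⁻¹ * ∑ j, (ξ - Xs j)⁻¹‖)
    (hupp : ‖(n : ℂ)⁻¹ * ∑ j, (ξ - Xs j)⁻¹‖ ≤ C₂)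
    (hLip : LipschitzOnWith (Real.toNNReal kLip)
      (fun z : ℂ => (n : ℂ)⁻¹ * ∑ j, (z - Xs j)⁻¹)
      {z : ℂ | ‖z - ξ‖ ≤ 2 / (C₁ * n)})
    (hmin : ∀ j, 3 / (C₁ * n) < ‖ξ - Xs j‖)
    (hC : 8 * (1 + 2 * C₂ ^ 2) / C₁ ^ 3 < C)
    (hn : 4 * C₂ * max (1 / C₁) (C * (kLip + 1)) < (n : ℝ)) :
    ∃ w : ℂ,
      ‖w - ξ‖ ≤ 3 / (2 * C₁ * n) ∧
      (Polynomial.derivative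
        ((Polynomial.X - Polynomial.C ξ) *
          ∏ j, (Polynomial.X - Polynomial.C (Xs j)))).IsRoot w ∧
      (∀ w' : ℂ, ‖w' - ξ‖ ≤ 3 / (2 * C₁ * n) →
        (Polynomial.derivative
          ((Polynomial.X - Polynomial.C ξ) *
            ∏ j, (Polynomial.X - Polynomial.C (Xs j)))).IsRoot w' → w' = w) ∧
      ‖w - ξ + ((n : ℂ) + 1)⁻¹ * ((n : ℂ)⁻¹ * ∑ j, (ξ - Xs j)⁻¹)⁻¹‖
        < C * (kLip + 1) / (n : ℝ) ^ 2 :=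
  critical_point_near_deterministic_root_general n ξ Xs C₁ C₂ kLip C hC₁ hk hlow hupp hLip hmin hC
    hn
end

section
/- Assume ξ ∈ ℂ, X_1,…,X_n ∈ ℂ, and positive constants C_1, C_2, k_Lip, C satisfy: C_1 ≤ |(1/n)∑_{j=1}^n 1/(ξ−X_j)| ≤ C_2 with C_1 ≤ C_2; min_{1≤j≤n} |ξ−X_j| > 3/(C_1 n); C > 8(1+2C_2²)/C_1³; and n > 4C_2·max{1/C_1, C(k_Lip+1)}. Set c_n := ξ − (1/(n+1))·1/((1/n)∑_{j=1}^n 1/(ξ−X_j)) and Y_n := ξ − 1/((1/n)∑_{j=1}^n 1/(ξ−X_j)). Then: (i) for every z with |z−c_n| ≤ C(k_Lip+1)/n² one has C(k_Lip+1)/n² < |z−ξ| < 5/(4C_1 n), also C(k_Lip+1)/n² < |z−Y_n| < 2/C_1, and C(k_Lip+1)/n² < 1/(C_1 n) < |z−X_j| for all 1 ≤ j ≤ n; (ii) for every z with |z−ξ| ≤ 3/(2nC_1) one has 3/(2C_1 n) < |z−Y_n| < 5/(2C_1), 3/(2C_1 n) < |z−X_j| for all 1 ≤ j ≤ n, and 1/(2C_1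 n) < |z−c_n| whenever |z−ξ| = 3/(2nC_1). -/
/-!
Since `C₁ ≤ |S| ≤ C₂`, the point `Yₙ` lies at distance `1/|S| ∈ [1/C₂, 1/C₁]` from `ξ`, and
`cₙ` is the point of the segment `[ξ, Yₙ]` at ratio `1/(n+1)`. The hypothesis on `n` says
`4 C₂ < C₁ n` and `C(k_Lip+1)/n² < 1/(4 C₂ n)`. With `δ = 1/(C₁ n)` all the radii involved are
then linearly ordered, and each inequality is a triangle inequality through `ξ`, `cₙ` or `Yₙ`.
-/

open AffineMap

theorem scale_bounds_of_four_mul_lt {C₁ C₂ K x : ℝ} (hC₁ : 0 < C₁) (hC : C₁ ≤ C₂)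
    (hx₁ : 4 * C₂ * (1 / C₁) < x) (hxK : 4 * C₂ * K < x) :
    1 < x ∧ 3 * (1 / C₁ / x) < 1 / C₂ ∧ 4 * (K / x ^ 2) < 1 / C₂ / x := by
  have hC₂ : 0 < C₂ := hC₁.trans_le hC
  have h4 : 4 * C₂ < C₁ * x := by rw [mul_one_div, div_lt_iff₀ hC₁] at hx₁; linarith
  have hx : 4 < x := by nlinarith
  refine ⟨by linarith, ?_, ?_⟩
  · rw [div_div, mul_one_div, div_lt_div_iff₀ (by positivity) hC₂]
    linarith
  · rw [div_div, mul_div_assoc', div_lt_div_iff₀ (by positivity) (by positivity)]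
    nlinarith

theorem sub_inv_natCast_add_one_mul_eq_lineMap (n : ℕ) (ξ w : ℂ) :
    ξ - ((n : ℂ) + 1)⁻¹ * w = lineMap ξ (ξ - w) ((n : ℝ) + 1)⁻¹ := by
  rw [lineMap_apply, vadd_eq_add, vsub_eq_sub, sub_sub_cancel_left, Complex.real_smul]
  push_cast
  ring

section Segment

variable {V P : Type*} [NormedAddCommGroup V] [NormedSpace ℝ V] [MetricSpace P]
  [NormedAddTorsor V P] {p q : P} {x τ R : ℝ}

theorem dist_left_lineMap_inv_add_one_bounds (hx : 1 ≤ x) (hτ : 0 < τ) (hτd : τ ≤ dist p q)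
    (hdR : dist p q ≤ R) :
    τ / x / 2 ≤ dist p (lineMap p q (x + 1)⁻¹) ∧
      dist p (lineMap p q (x + 1)⁻¹) < R / x := by
  rw [dist_left_lineMap, Real.norm_of_nonneg (by positivity), inv_mul_eq_div, div_div]
  constructor
  · rw [div_le_div_iff₀ (by positivity) (by positivity)]
    nlinarith
  · rw [div_lt_div_iff₀ (by positivity) (by positivity)]
    nlinarith

theorem dist_lineMap_inv_add_one_right_bounds (hx : 1 ≤ x) (hτ : 0 ≤ τ) (hτd : τ ≤ dist p q)
    (hdR : dist p q ≤ R) :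
    τ / 2 ≤ dist (lineMap p q (x + 1)⁻¹) q ∧ dist (lineMap p q (x + 1)⁻¹) q ≤ R := by
  have hx' : 1 - (x + 1)⁻¹ = x / (x + 1) := by field_simp; ring
  rw [dist_lineMap_right, hx', Real.norm_of_nonneg (by positivity), div_mul_eq_mul_div]
  constructor
  · rw [le_div_iff₀ (by positivity)]
    nlinarith
  · rw [div_le_iff₀ (by positivity)]
    nlinarith

end Segment

section Triangle

variable {P ι : Type*} [PseudoMetricSpace P] {ξ c Y z : P} {X : ι → P}

theorem dist_bounds_near_center {δ σ τ R ε : ℝ} (hε : 4 * ε < σ) (hσδ : σ ≤ δ)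
    (hστ : σ ≤ τ) (hξc : σ / 2 ≤ dist ξ c) (hξc' : dist ξ c < δ) (hcY : τ / 2 ≤ dist c Y)
    (hcY' : dist c Y ≤ R) (hX : ∀ j, 3 * δ < dist ξ (X j)) (hz : dist z c ≤ ε) :
    (ε < dist z ξ ∧ dist z ξ < 5 / 4 * δ) ∧ (ε < dist z Y ∧ dist z Y < 2 * R) ∧
      (ε < δ ∧ ∀ j, δ < dist z (X j)) := by
  have hξc₀ : 0 ≤ dist ξ c := dist_nonneg
  have hzξ : dist z ξ < 5 / 4 * δ := by linarith [dist_triangle z c ξ, dist_comm ξ c]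
  refine ⟨⟨?_, hzξ⟩, ⟨?_, ?_⟩, by linarith, fun j => ?_⟩
  · linarith [dist_triangle ξ z c, dist_comm ξ z]
  · linarith [dist_triangle c z Y, dist_comm c z]
  · linarith [dist_triangle z c Y, dist_nonneg (x := c) (y := Y)]
  · linarith [dist_triangle ξ z (X j), dist_comm ξ z, hX j]

theorem dist_bounds_near_root {δ τ R : ℝ} (hδτ : 3 * δ < τ) (hξY : τ ≤ dist ξ Y)
    (hξY' : dist ξ Y ≤ R) (hξc : dist ξ c < δ) (hX : ∀ j, 3 * δ < dist ξ (X j))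
    (hz : dist z ξ ≤ 3 / 2 * δ) :
    (3 / 2 * δ < dist z Y ∧ dist z Y < 5 / 2 * R) ∧ (∀ j, 3 / 2 * δ < dist z (X j)) ∧
      (dist z ξ = 3 / 2 * δ → δ / 2 < dist z c) := by
  have hξc₀ : 0 ≤ dist ξ c := dist_nonneg
  refine ⟨⟨?_, ?_⟩, fun j => ?_, fun h => ?_⟩
  · linarith [dist_triangle ξ z Y, dist_comm ξ z]
  · linarith [dist_triangle z ξ Y]
  · linarith [dist_triangle ξ z (X j), dist_comm ξ z, hX j]
  · linarith [dist_triangle z c ξ, dist_comm ξ c]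

end Triangle

theorem detLoc_inequalities_general
    (n : ℕ) (ξ : ℂ) (Xs : Fin n → ℂ) (C₁ C₂ kLip C : ℝ)
    (hC₁ : 0 < C₁)
    (hlow : C₁ ≤ ‖(n : ℂ)⁻¹ * ∑ j, (ξ - Xs j)⁻¹‖)
    (hupp : ‖(n : ℂ)⁻¹ * ∑ j, (ξ - Xs j)⁻¹‖ ≤ C₂)
    (hmin : ∀ j, 3 / (C₁ * n) < ‖ξ - Xs j‖)
    (hn : 4 * C₂ * max (1 / C₁) (C * (kLip + 1)) < (n : ℝ))
    (S cn Yn : ℂ)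
    (hS : S = (n : ℂ)⁻¹ * ∑ j, (ξ - Xs j)⁻¹)
    (hcn : cn = ξ - ((n : ℂ) + 1)⁻¹ * S⁻¹)
    (hYn : Yn = ξ - S⁻¹) :
    (∀ z : ℂ, ‖z - cn‖ ≤ C * (kLip + 1) / (n : ℝ) ^ 2 →
      (C * (kLip + 1) / (n : ℝ) ^ 2 < ‖z - ξ‖ ∧
        ‖z - ξ‖ < 5 / (4 * C₁ * n)) ∧
      (C * (kLip + 1) / (n : ℝ) ^ 2 < ‖z - Yn‖ ∧
        ‖z - Yn‖ < 2 / C₁) ∧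
      (C * (kLip + 1) / (n : ℝ) ^ 2 < 1 / (C₁ * n) ∧
        ∀ j, 1 / (C₁ * n) < ‖z - Xs j‖)) ∧
    (∀ z : ℂ, ‖z - ξ‖ ≤ 3 / (2 * n * C₁) →
      (3 / (2 * C₁ * n) < ‖z - Yn‖ ∧
        ‖z - Yn‖ < 5 / (2 * C₁)) ∧
      (∀ j, 3 / (2 * C₁ * n) < ‖z - Xs j‖) ∧
      (‖z - ξ‖ = 3 / (2 * n * C₁) →
        1 / (2 * C₁ * n) < ‖z - cn‖)) := by
  rw [← hS] at hlow hupp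
  have hC₂ : 0 < C₂ := hC₁.trans_le (hlow.trans hupp)
  rw [mul_max_of_nonneg _ _ (by positivity), max_lt_iff] at hn
  obtain ⟨hn₁, hδτ, hε⟩ := scale_bounds_of_four_mul_lt hC₁ (hlow.trans hupp) hn.1 hn.2
  have hξY : 1 / C₂ ≤ dist ξ Yn ∧ dist ξ Yn ≤ 1 / C₁ := by
    rw [hYn, dist_eq_norm, sub_sub_cancel, norm_inv, ← one_div]
    exact ⟨one_div_le_one_div_of_le (hC₁.trans_le hlow) hupp,
      one_div_le_one_div_of_le hC₁ hlow⟩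
  obtain ⟨hξc, hξc'⟩ :=
    dist_left_lineMap_inv_add_one_bounds hn₁.le (one_div_pos.2 hC₂) hξY.1 hξY.2
  obtain ⟨hcY, hcY'⟩ :=
    dist_lineMap_inv_add_one_right_bounds hn₁.le (one_div_pos.2 hC₂).le hξY.1 hξY.2
  have hX : ∀ j, 3 * (1 / C₁ / n) < dist ξ (Xs j) := fun j => by
    rw [dist_eq_norm]
    exact lt_of_eq_of_lt (by ring) (hmin j)
  rw [hcn, sub_inv_natCast_add_one_mul_eq_lineMap, ← hYn]
  simp only [← dist_eq_norm]
  -- The side goals of `convert` only identify constants, e.g. `5 / (4 * C₁ * n)` and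
  -- `5 / 4 * (1 / C₁ / n)`.
  refine ⟨fun z hz => ?_, fun z hz => ?_⟩
  · convert dist_bounds_near_center hε
      (div_le_div_of_nonneg_right (hξY.1.trans hξY.2) n.cast_nonneg) 
      (div_le_self (one_div_pos.2 hC₂).le hn₁.le) hξc hξc' hcY hcY' hX hz using 3 <;> ring_nf
  · convert dist_bounds_near_root hδτ hξY.1 hξY.2 hξc' hX (hz.trans_eq (by ring)) using 3 <;>
      ring_nf

/-- Lemma `detIneq`: key inequalities near the root `ξ`. -/
theorem detLoc_inequalities
    (n : ℕ) (ξ : ℂ) (Xs : Fin n → ℂ) (C₁ C₂ kLip C : ℝ)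
    (hC₁ : 0 < C₁) (hC₂ : 0 < C₂) (hk : 0 < kLip) (hle : C₁ ≤ C₂)
    (hlow : C₁ ≤ ‖(n : ℂ)⁻¹ * ∑ j, (ξ - Xs j)⁻¹‖)
    (hupp : ‖(n : ℂ)⁻¹ * ∑ j, (ξ - Xs j)⁻¹‖ ≤ C₂)
    (hmin : ∀ j, 3 / (C₁ * n) < ‖ξ - Xs j‖)
    (hC : 8 * (1 + 2 * C₂ ^ 2) / C₁ ^ 3 < C)
    (hn : 4 * C₂ * max (1 / C₁) (C * (kLip + 1)) < (n : ℝ))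
    (S cn Yn : ℂ)
    (hS : S = (n : ℂ)⁻¹ * ∑ j, (ξ - Xs j)⁻¹)
    (hcn : cn = ξ - ((n : ℂ) + 1)⁻¹ * S⁻¹)
    (hYn : Yn = ξ - S⁻¹) :
    (∀ z : ℂ, ‖z - cn‖ ≤ C * (kLip + 1) / (n : ℝ) ^ 2 →
      (C * (kLip + 1) / (n : ℝ) ^ 2 < ‖z - ξ‖ ∧
        ‖z - ξ‖ < 5 / (4 * C₁ * n)) ∧
      (C * (kLip + 1) / (n : ℝ) ^ 2 < ‖z - Yn‖ ∧
        ‖z - Yn‖ < 2 / C₁) ∧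
      (C * (kLip + 1) / (n : ℝ) ^ 2 < 1 / (C₁ * n) ∧
        ∀ j, 1 / (C₁ * n) < ‖z - Xs j‖)) ∧
    (∀ z : ℂ, ‖z - ξ‖ ≤ 3 / (2 * n * C₁) →
      (3 / (2 * C₁ * n) < ‖z - Yn‖ ∧
        ‖z - Yn‖ < 5 / (2 * C₁)) ∧
      (∀ j, 3 / (2 * C₁ * n) < ‖z - Xs j‖) ∧
      (‖z - ξ‖ = 3 / (2 * n * C₁) →
        1 / (2 * C₁ * n) < ‖z - cn‖)) :=
  detLoc_inequalities_general n ξ Xs C₁ C₂ kLip C hC₁ hlow hupp hmin hn S cn Yn hS hcn hYn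
end

section
/- Fix C, c, ε > 0. Let μ be a probability measure on ℂ supported on B(0, C) with |m_μ(z)| ≥ c for all z on Γ, the boundary circle of B(0, C+ε). Let X_1,…,X_n be i.i.d. random variables with distribution μ. Then for any function φ (possibly depending on n) that is analytic in a neighborhood of the closure of B(0, C+ε), one has ∑_{j=1}^{n−1} φ(w_j^{(n)}) = ∑_{i=1}^n φ(X_i) + O(∮_Γ |φ(z)| |dz|), where w_1^{(n)},…,w_{n−1}^{(n)} are the critical points of p_n(z) := ∏_{i=1}^n (z−X_i) and the implicit constant depends only on C, c, and ε. -/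
open MeasureTheory ProbabilityTheory Filter
open scoped ENNReal

/-- The Cauchy–Stieltjes transform of a measure on `ℂ`. -/
noncomputable def cauchyStieltjes (μ : Measure ℂ) (z : ℂ) : ℂ := ∫ x, (z - x)⁻¹ ∂μ

/-- The monic polynomial with roots `x 0, …, x (n-1)`. -/
noncomputable def rootPoly (n : ℕ) (x : ℕ → ℂ) : Polynomial ℂ :=
  ∏ j ∈ Finset.range n, (Polynomial.X - Polynomial.C (x j))

/-- The arclength integral `∮_Γ |φ(z)| |dz|` over the circle of radius `r` about `0`. -/
noncomputable def circleAbsIntegral (φ : ℂ → ℂ) (r : ℝ) : ℝ :=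
  r * ∫ θ in (0:ℝ)..(2 * Real.pi),
    ‖φ ((r : ℂ) * Complex.exp ((θ : ℂ) * Complex.I))‖

/-!
The estimate is deterministic. If the zeros `x_i` of `p` lie in `closedBall 0 C`, so do the
critical points (Gauss–Lucas), and Cauchy's integral formula on the circle `|z| = R > C` gives
`∑ φ(w_j) - ∑ φ(x_i) = (2πi)⁻¹ ∮ (p''/p' - p'/p) φ`. Writing `s = p'/p = ∑ 1/(z - x_i)`, the
integrand factor is `p''/p' - p'/p = s'/s`, and on the circle `|s'| ≤ n/(R - C)²` while
`Re(z s(z)) ≥ n R/(R + C)`, so `|s'/s| ≤ (R + C)/(R - C)²`. Since the `X_i` lie in `B(0, C)`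
almost surely, the event has probability one.
-/

open Metric Polynomial

/-- `card s` times the Cauchy–Stieltjes transform of the empirical measure of `s`. -/
noncomputable def cauchySum (s : Multiset ℂ) (z : ℂ) : ℂ := (s.map fun w => (z - w)⁻¹).sum

@[simp] lemma cauchySum_zero : cauchySum 0 = 0 := by
  funext z; simp [cauchySum]

@[simp] lemma cauchySum_cons (a : ℂ) (s : Multiset ℂ) (z : ℂ) :
    cauchySum (a ::ₘ s) z = (z - a)⁻¹ + cauchySum s z := by
  simp [cauchySum]

@[simp] lemma cauchySum_singleton (a z : ℂ) : cauchySum {a} z = (z - a)⁻¹ := by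
  simp [cauchySum]

lemma hasDerivAt_cauchySum {s : Multiset ℂ} {z : ℂ} (hz : ∀ w ∈ s, w ≠ z) :
    HasDerivAt (cauchySum s) (-(s.map fun w => ((z - w) ^ 2)⁻¹).sum) z := by
  induction s using Multiset.induction_on with
  | empty => simp
  | cons a s ih =>
    have ha : z - a ≠ 0 := sub_ne_zero.2 (hz a (Multiset.mem_cons_self a s)).symm
    have h := (((hasDerivAt_id' z).sub_const a).fun_inv ha).fun_add
      (ih fun w hw => hz w (Multiset.mem_cons_of_mem hw))
    rw [show cauchySum (a ::ₘ s) = _ from funext (cauchySum_cons a s)]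
    refine h.congr_deriv ?_
    simp [div_eq_mul_inv, add_comm]

lemma continuousOn_cauchySum {s : Multiset ℂ} {t : Set ℂ} (h : ∀ w ∈ s, w ∉ t) :
    ContinuousOn (cauchySum s) t := fun _ hz =>
  (hasDerivAt_cauchySum fun w hw hwz => h w hw (hwz ▸ hz)).continuousAt.continuousWithinAt

lemma circleIntegral_cauchySum_mul {c : ℂ} {R : ℝ} {φ : ℂ → ℂ} (hφ : DiffContOnCl ℂ φ (ball c R))
    {s : Multiset ℂ} (hs : ∀ w ∈ s, w ∈ ball c R) :
    (∮ z in C(c, R), cauchySum s z * φ z) = 2 * Real.pi * Complex.I * (s.map φ).sum := by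
  induction s using Multiset.induction_on with
  | empty => simp [circleIntegral]
  | cons a s ih =>
    have ha : a ∈ ball c R := hs a (Multiset.mem_cons_self a s)
    have hR : 0 < R := nonempty_ball.1 ⟨a, ha⟩
    have hφc : ContinuousOn φ (sphere c R) :=
      hφ.continuousOn.mono (closure_ball c hR.ne' ▸ sphere_subset_closedBall)
    have hoff : ∀ w ∈ a ::ₘ s, w ∉ sphere c R := fun w hw hws =>
      (mem_ball.1 (hs w hw)).ne (mem_sphere.1 hws)
    have hint : ∀ t ≤ a ::ₘ s, CircleIntegrable (fun z => cauchySum t z * φ z) c R :=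
      fun t ht => ((continuousOn_cauchySum fun w hw => hoff w (Multiset.mem_of_le ht hw)).mul
        hφc).circleIntegrable hR.le
    have hint_a := hint {a} (by simp)
    have hcauchy := hφ.circleIntegral_sub_inv_smul ha
    simp only [cauchySum_singleton, smul_eq_mul] at hint_a hcauchy
    simp only [cauchySum_cons, add_mul, Multiset.map_cons, Multiset.sum_cons]
    rw [circleIntegral.integral_add hint_a (hint s (Multiset.le_cons_self s a)), hcauchy,
      ih fun w hw => hs w (Multiset.mem_cons_of_mem hw)]
    ring

lemma div_add_le_re_mul_inv_sub {C : ℝ} {x z : ℂ} (hx : ‖x‖ ≤ C) (hz : C < ‖z‖) :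
    ‖z‖ / (‖z‖ + C) ≤ (z * (z - x)⁻¹).re := by
  have hzx : 0 < Complex.normSq (z - x) :=
    Complex.normSq_pos.2 (sub_ne_zero.2 fun h => (h ▸ hz).not_ge hx)
  have hre : (z * (z - x)⁻¹).re =
      (‖z‖ ^ 2 - (z * (starRingEnd ℂ) x).re) / Complex.normSq (z - x) := by
    rw [Complex.inv_def, ← mul_assoc, Complex.re_mul_ofReal, div_eq_mul_inv, map_sub, mul_sub,
      Complex.mul_conj, Complex.sub_re, Complex.ofReal_re, Complex.normSq_eq_norm_sq]
  have hnormSq : Complex.normSq (z - x) =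
      ‖z‖ ^ 2 - 2 * (z * (starRingEnd ℂ) x).re + ‖x‖ ^ 2 := by
    rw [Complex.normSq_sub, Complex.normSq_eq_norm_sq, Complex.normSq_eq_norm_sq]; ring
  have ht : -(‖z‖ * ‖x‖) ≤ (z * (starRingEnd ℂ) x).re := by
    have := Complex.abs_re_le_norm (z * (starRingEnd ℂ) x)
    rw [norm_mul, Complex.norm_conj] at this
    linarith [abs_le.1 this]
  rw [hre, div_le_div_iff₀ (by linarith [norm_nonneg x]) hzx, hnormSq]
  -- with `t = Re(z x̄) ≥ -‖z‖‖x‖`, the claim is `‖z‖²C - ‖z‖‖x‖² + t(‖z‖ - C) ≥ 0`, and the left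
  -- side is at least `‖z‖(C - ‖x‖)(‖z‖ + ‖x‖)`
  nlinarith [mul_nonneg (by linarith : 0 ≤ (z * (starRingEnd ℂ) x).re + ‖z‖ * ‖x‖)
    (by linarith : 0 ≤ ‖z‖ - C), mul_nonneg (mul_nonneg (norm_nonneg z) (by linarith : 0 ≤ C - ‖x‖))
    (by linarith [norm_nonneg x] : 0 ≤ ‖z‖ + ‖x‖)]

lemma card_div_le_norm_cauchySum {C : ℝ} {s : Multiset ℂ} {z : ℂ} (hs : ∀ w ∈ s, ‖w‖ ≤ C)
    (hz : C < ‖z‖) : Multiset.card s / (‖z‖ + C) ≤ ‖cauchySum s z‖ := by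
  rcases s.empty_or_exists_mem with rfl | ⟨a, ha⟩
  · simp
  have hz0 : 0 < ‖z‖ := ((norm_nonneg a).trans (hs a ha)).trans_lt hz
  have hre : Multiset.card s * (‖z‖ / (‖z‖ + C)) ≤ (z * cauchySum s z).re := by
    clear ha
    induction s using Multiset.induction_on with
    | empty => simp
    | cons a s ih =>
      simp only [cauchySum_cons, mul_add, Complex.add_re, Multiset.card_cons, Nat.cast_add,
        Nat.cast_one, add_mul, one_mul]
      linarith [div_add_le_re_mul_inv_sub (hs a (Multiset.mem_cons_self a s)) hz,
        ih fun w hw => hs w (Multiset.mem_cons_of_mem hw)]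
  calc Multiset.card s / (‖z‖ + C) = Multiset.card s * (‖z‖ / (‖z‖ + C)) / ‖z‖ := by
        field_simp
    _ ≤ ‖z * cauchySum s z‖ / ‖z‖ := by gcongr; exact hre.trans (Complex.re_le_norm _)
    _ = ‖cauchySum s z‖ := by rw [norm_mul]; field_simp

lemma norm_deriv_cauchySum_le {C : ℝ} {s : Multiset ℂ} {z : ℂ} (hs : ∀ w ∈ s, ‖w‖ ≤ C)
    (hz : C < ‖z‖) : ‖deriv (cauchySum s) z‖ ≤ Multiset.card s / (‖z‖ - C) ^ 2 := by
  have hdist : ∀ w ∈ s, ‖z‖ - C ≤ ‖z - w‖ := fun w hw =>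
    (sub_le_sub_left (hs w hw) _).trans (norm_sub_norm_le z w)
  rw [(hasDerivAt_cauchySum fun w hw hwz => (hwz ▸ hz).not_ge (hs w hw)).deriv, norm_neg,
    div_eq_mul_inv, ← nsmul_eq_mul]
  calc ‖(s.map fun w => ((z - w) ^ 2)⁻¹).sum‖ ≤ (s.map fun w => ‖((z - w) ^ 2)⁻¹‖).sum := by
        simpa only [Multiset.map_map, Function.comp_def] using
          norm_multiset_sum_le (s.map fun w => ((z - w) ^ 2)⁻¹)
    _ ≤ (s.map fun _ => ((‖z‖ - C) ^ 2)⁻¹).sum := by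
        refine Multiset.sum_map_le_sum_map _ _ fun w hw => ?_
        rw [norm_inv, norm_pow]
        gcongr
        exact hdist w hw
    _ = Multiset.card s • ((‖z‖ - C) ^ 2)⁻¹ := by simp

lemma cauchySum_roots (p : ℂ[X]) {z : ℂ} (hz : p.eval z ≠ 0) :
    cauchySum p.roots z = p.derivative.eval z / p.eval z := by
  simp [cauchySum, (IsAlgClosed.splits p).eval_derivative_div_eval_of_ne_zero hz]

lemma cauchySum_roots_derivative_sub_cauchySum_roots (p : ℂ[X]) {z : ℂ} (hp : p.eval z ≠ 0)
    (hp' : p.derivative.eval z ≠ 0) :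
    cauchySum p.derivative.roots z - cauchySum p.roots z = logDeriv (cauchySum p.roots) z := by
  have hnhds : cauchySum p.roots =ᶠ[nhds z] fun y => p.derivative.eval y / p.eval y :=
    (p.continuous.continuousAt.eventually_ne hp).mono fun y hy => cauchySum_roots p hy
  rw [(logDeriv_congr_nhds hnhds).eq_of_nhds, logDeriv_div z hp' hp p.derivative.differentiableAt
    p.differentiableAt, logDeriv_apply, logDeriv_apply, Polynomial.deriv, Polynomial.deriv,
    cauchySum_roots _ hp', cauchySum_roots _ hp]

lemma eval_ne_zero_of_norm_roots_le {p : ℂ[X]} (hp : p ≠ 0) {C : ℝ} (h : ∀ w ∈ p.roots, ‖w‖ ≤ C)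
    {z : ℂ} (hz : C < ‖z‖) : p.eval z ≠ 0 := fun hz0 =>
  (h z ((mem_roots hp).2 hz0)).not_gt hz

lemma nonneg_of_norm_roots_le {p : ℂ[X]} (hp : 0 < p.degree) {C : ℝ}
    (h : ∀ w ∈ p.roots, ‖w‖ ≤ C) : 0 ≤ C :=
  have ⟨w, hw⟩ := IsAlgClosed.exists_root p hp.ne'
  (norm_nonneg w).trans (h w ((mem_roots (ne_zero_of_degree_gt hp)).2 hw))

lemma norm_roots_derivative_le {p : ℂ[X]} (hp : 0 < p.degree) {C : ℝ}
    (h : ∀ w ∈ p.roots, ‖w‖ ≤ C) : ∀ w ∈ p.derivative.roots, ‖w‖ ≤ C := by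
  intro w hw
  have hsub : p.rootSet ℂ ⊆ closedBall 0 C := fun v hv => by
    rw [mem_rootSet, coe_aeval_eq_eval] at hv
    exact mem_closedBall_zero_iff.2 (h v ((mem_roots hv.1).2 hv.2))
  have hw' : w ∈ p.derivative.rootSet ℂ := by
    rw [mem_rootSet, coe_aeval_eq_eval]
    exact mem_roots'.1 hw
  exact mem_closedBall_zero_iff.1 <| convexHull_min hsub (convex_closedBall 0 C)
    (rootSet_derivative_subset_convexHull_rootSet hp hw')

lemma norm_circleIntegral_mul_le {f φ : ℂ → ℂ} {R M : ℝ} (hR : 0 ≤ R)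
    (hφ : ContinuousOn φ (sphere 0 R)) (hf : ∀ z ∈ sphere (0 : ℂ) R, ‖f z‖ ≤ M) :
    ‖∮ z in C(0, R), f z * φ z‖ ≤ M * circleAbsIntegral φ R := by
  have hφc : Continuous fun θ => φ (circleMap 0 R θ) :=
    hφ.comp_continuous (continuous_circleMap 0 R) (circleMap_mem_sphere 0 hR)
  have hpt : ∀ θ, ‖deriv (circleMap 0 R) θ • (f (circleMap 0 R θ) * φ (circleMap 0 R θ))‖ ≤
      M * (R * ‖φ (circleMap 0 R θ)‖) := fun θ => by
    rw [deriv_circleMap, norm_smul, norm_mul, norm_mul, norm_circleMap_zero, Complex.norm_I,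
      abs_of_nonneg hR, mul_one, mul_left_comm]
    gcongr
    exact hf _ (circleMap_mem_sphere 0 hR θ)
  calc ‖∮ z in C(0, R), f z * φ z‖ ≤ ∫ θ in (0)..(2 * Real.pi), M * (R * ‖φ (circleMap 0 R θ)‖) :=
        intervalIntegral.norm_integral_le_of_norm_le Real.two_pi_pos.le
          (Filter.Eventually.of_forall fun θ _ => hpt θ)
          (((hφc.norm.const_mul R).const_mul M).intervalIntegrable _ _)
    _ = M * circleAbsIntegral φ R := by
        simp [circleAbsIntegral, circleMap_zero, intervalIntegral.integral_const_mul]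

lemma norm_cauchySum_roots_derivative_sub_le {p : ℂ[X]} (hp : 0 < p.degree) {C : ℝ}
    (hroots : ∀ w ∈ p.roots, ‖w‖ ≤ C) {z : ℂ} (hz : C < ‖z‖) :
    ‖cauchySum p.derivative.roots z - cauchySum p.roots z‖ ≤ (‖z‖ + C) / (‖z‖ - C) ^ 2 := by
  have hdeg : 0 < p.natDegree := natDegree_pos_iff_degree_pos.2 hp
  have hcard : 0 < Multiset.card p.roots := IsAlgClosed.card_roots_eq_natDegree (p := p) ▸ hdeg
  have hC := nonneg_of_norm_roots_le hp hroots
  rw [cauchySum_roots_derivative_sub_cauchySum_roots p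
    (eval_ne_zero_of_norm_roots_le (ne_zero_of_degree_gt hp) hroots hz)
    (eval_ne_zero_of_norm_roots_le (derivative_ne_zero.2 hdeg.ne')
      (norm_roots_derivative_le hp hroots) hz), logDeriv_apply, norm_div]
  calc ‖deriv (cauchySum p.roots) z‖ / ‖cauchySum p.roots z‖
      ≤ (Multiset.card p.roots / (‖z‖ - C) ^ 2) / (Multiset.card p.roots / (‖z‖ + C)) :=
        div_le_div₀ (by positivity) (norm_deriv_cauchySum_le hroots hz)
          (div_pos (Nat.cast_pos.2 hcard) (by linarith)) (card_div_le_norm_cauchySum hroots hz)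
    _ = (‖z‖ + C) / (‖z‖ - C) ^ 2 := by field_simp

theorem norm_sum_roots_derivative_sub_sum_roots_le {p : ℂ[X]} (hp : 0 < p.degree) {C R : ℝ}
    (hroots : ∀ w ∈ p.roots, ‖w‖ ≤ C) (hCR : C < R) {φ : ℂ → ℂ}
    (hφ : DiffContOnCl ℂ φ (ball 0 R)) :
    ‖(p.derivative.roots.map φ).sum - (p.roots.map φ).sum‖ ≤
      (R + C) / (2 * Real.pi * (R - C) ^ 2) * circleAbsIntegral φ R := by
  have hroots' := norm_roots_derivative_le hp hroots
  have hR : 0 < R := (nonneg_of_norm_roots_le hp hroots).trans_lt hCR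
  have hφc : ContinuousOn φ (sphere (0 : ℂ) R) :=
    hφ.continuousOn.mono (closure_ball (0 : ℂ) hR.ne' ▸ sphere_subset_closedBall)
  have hbound : ∀ z ∈ sphere (0 : ℂ) R,
      ‖cauchySum p.derivative.roots z - cauchySum p.roots z‖ ≤ (R + C) / (R - C) ^ 2 :=
    fun z hz => mem_sphere_zero_iff_norm.1 hz ▸
      norm_cauchySum_roots_derivative_sub_le hp hroots (mem_sphere_zero_iff_norm.1 hz ▸ hCR)
  have hball : ∀ {s : Multiset ℂ}, (∀ w ∈ s, ‖w‖ ≤ C) → ∀ w ∈ s, w ∈ ball 0 R :=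
    fun hs w hw => mem_ball_zero_iff.2 ((hs w hw).trans_lt hCR)
  have hint : ∀ {s : Multiset ℂ}, (∀ w ∈ s, ‖w‖ ≤ C) →
      CircleIntegrable (fun z => cauchySum s z * φ z) 0 R := fun hs =>
    ((continuousOn_cauchySum fun w hw hws =>
      (mem_ball.1 (hball hs w hw)).ne (mem_sphere.1 hws)).mul hφc).circleIntegrable hR.le
  have hcontour : (∮ z in C(0, R), (cauchySum p.derivative.roots z - cauchySum p.roots z) * φ z)
      = 2 * Real.pi * Complex.I *
        ((p.derivative.roots.map φ).sum - (p.roots.map φ).sum) := by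
    simp only [sub_mul]
    rw [circleIntegral.integral_sub (hint hroots') (hint hroots), mul_sub,
      circleIntegral_cauchySum_mul hφ (hball hroots'),
      circleIntegral_cauchySum_mul hφ (hball hroots)]
  calc ‖(p.derivative.roots.map φ).sum - (p.roots.map φ).sum‖
      = ‖∮ z in C(0, R), (cauchySum p.derivative.roots z - cauchySum p.roots z) * φ z‖ /
          (2 * Real.pi) := by
        rw [hcontour, norm_mul, norm_mul, norm_mul, Complex.norm_I, Complex.norm_real,
          Real.norm_of_nonneg Real.pi_pos.le, Complex.norm_two]
        field_simp
    _ ≤ (R + C) / (R - C) ^ 2 * circleAbsIntegral φ R / (2 * Real.pi) := by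
        gcongr
        exact norm_circleIntegral_mul_le hR.le hφc hbound
    _ = (R + C) / (2 * Real.pi * (R - C) ^ 2) * circleAbsIntegral φ R := by
        field_simp

lemma rootPoly_eq_multiset_prod (n : ℕ) (x : ℕ → ℂ) :
    rootPoly n x = (((Finset.range n).val.map x).map fun a => X - C a).prod := by
  rw [rootPoly, Finset.prod_eq_multiset_prod, Multiset.map_map]
  rfl

lemma roots_rootPoly (n : ℕ) (x : ℕ → ℂ) : (rootPoly n x).roots = (Finset.range n).val.map x := by
  rw [rootPoly_eq_multiset_prod, roots_multiset_prod_X_sub_C]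

lemma natDegree_rootPoly (n : ℕ) (x : ℕ → ℂ) : (rootPoly n x).natDegree = n := by
  rw [rootPoly_eq_multiset_prod, natDegree_multiset_prod_X_sub_C_eq_card]
  simp

theorem norm_sum_roots_derivative_rootPoly_sub_le {n : ℕ} (hn : 0 < n) {x : ℕ → ℂ} {C R : ℝ}
    (hx : ∀ j ∈ Finset.range n, ‖x j‖ ≤ C) (hCR : C < R) {φ : ℂ → ℂ}
    (hφ : DiffContOnCl ℂ φ (ball 0 R)) :
    ‖((rootPoly n x).derivative.roots.map φ).sum - ∑ i ∈ Finset.range n, φ (x i)‖ ≤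
      (R + C) / (2 * Real.pi * (R - C) ^ 2) * circleAbsIntegral φ R := by
  have hdeg : 0 < (rootPoly n x).degree :=
    natDegree_pos_iff_degree_pos.1 ((natDegree_rootPoly n x).symm ▸ hn)
  have hroots : ∀ w ∈ (rootPoly n x).roots, ‖w‖ ≤ C := by
    simpa [roots_rootPoly] using hx
  simpa [roots_rootPoly, Finset.sum_eq_multiset_sum] using
    norm_sum_roots_derivative_sub_sum_roots_le hdeg hroots hCR hφ

theorem local_law_analytic_test_functions_general
    {Ω : Type*} [MeasurableSpace Ω] (P : Measure Ω) [IsProbabilityMeasure P]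
    (C ε : ℝ) (hC : 0 < C) (hε : 0 < ε)
    (μ : Measure ℂ)
    (hsupp : μ (Metric.ball (0 : ℂ) C)ᶜ = 0)
    (X : ℕ → Ω → ℂ) (hXm : ∀ i, Measurable (X i))
    (hdist : ∀ i, Measure.map (X i) P = μ) :
    ∃ K > (0:ℝ), ∀ α > (0:ℝ), ∃ K' : ℝ, ∀ n : ℕ, 0 < n → ∀ φ : ℂ → ℂ,
      (∃ U : Set ℂ, IsOpen U ∧ Metric.closedBall (0 : ℂ) (C + ε) ⊆ U ∧
        DifferentiableOn ℂ φ U) →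
      P {ω |
        ‖(Multiset.map φ
              (Polynomial.roots
                (Polynomial.derivative (rootPoly n fun j => X j ω)))).sum -
            ∑ i ∈ Finset.range n, φ (X i ω)‖ ≤
        K * circleAbsIntegral φ (C + ε)} ≥
      1 - ENNReal.ofReal (K' * (n : ℝ) ^ (-α)) := by
  refine ⟨(C + ε + C) / (2 * Real.pi * (C + ε - C) ^ 2), by rw [add_sub_cancel_left]; positivity,
    fun α _ => ⟨0, fun n hn φ ⟨U, _, hU, hφU⟩ => ?_⟩⟩
  have hφ : DiffContOnCl ℂ φ (ball 0 (C + ε)) :=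
    (hφU.mono (closure_ball_subset_closedBall.trans hU)).diffContOnCl
  have hX : ∀ j, ∀ᵐ ω ∂P, ‖X j ω‖ ≤ C := fun j =>
    ae_of_ae_map (hXm j).aemeasurable <| by
      rw [hdist j]
      exact (show ∀ᵐ z ∂μ, z ∈ ball (0 : ℂ) C from mem_ae_iff.2 hsupp).mono fun z hz =>
        (mem_ball_zero_iff.1 hz).le
  have hXn : ∀ᵐ ω ∂P, ∀ j ∈ Finset.range n, ‖X j ω‖ ≤ C :=
    (eventually_all_finset _).2 fun j _ => hX j
  calc 1 - ENNReal.ofReal (0 * (n : ℝ) ^ (-α)) ≤ P Set.univ := by simp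
    _ ≤ P _ := measure_mono_ae <| hXn.mono fun ω hω _ =>
      norm_sum_roots_derivative_rootPoly_sub_le hn hω (by linarith) hφ

/-- Theorem `analytic`, local law for analytic test functions. -/
theorem local_law_analytic_test_functions
    {Ω : Type*} [MeasurableSpace Ω] (P : Measure Ω) [IsProbabilityMeasure P]
    (C c ε : ℝ) (hC : 0 < C) (hc : 0 < c) (hε : 0 < ε)
    (μ : Measure ℂ) [IsProbabilityMeasure μ]
    (hsupp : μ (Metric.ball (0 : ℂ) C)ᶜ = 0)
    (hlow : ∀ z ∈ Metric.sphere (0 : ℂ) (C + ε),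
      c ≤ ‖cauchyStieltjes μ z‖)
    (X : ℕ → Ω → ℂ) (hXm : ∀ i, Measurable (X i))
    (hindep : iIndepFun X P)
    (hdist : ∀ i, Measure.map (X i) P = μ) :
    ∃ K > (0:ℝ), ∀ α > (0:ℝ), ∃ K' : ℝ, ∀ n : ℕ, 0 < n → ∀ φ : ℂ → ℂ,
      (∃ U : Set ℂ, IsOpen U ∧ Metric.closedBall (0 : ℂ) (C + ε) ⊆ U ∧
        DifferentiableOn ℂ φ U) →
      P {ω |
        ‖(Multiset.map φ
              (Polynomial.roots
                (Polynomial.derivative (rootPoly n fun j => X j ω)))).sum -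
            ∑ i ∈ Finset.range n, φ (X i ω)‖ ≤
        K * circleAbsIntegral φ (C + ε)} ≥
      1 - ENNReal.ofReal (K' * (n : ℝ) ^ (-α)) :=
  local_law_analytic_test_functions_general P C ε hC hε μ hsupp X hXm hdist
end

section
/- Fix C > 0. For each n, let X_1,…,X_n be arbitrary complex-valued random variables (not necessarily independent nor identically distributed), and let Z be uniformly distributed on B(0, n^C), independent of X_1,…,X_n. Then for every a > 0 there exists b > 0 such that |∑_{i=1}^n 1/(Z−X_i)| ≤ n^b with probability 1 − O_a(n^{−a}). -/
/-!
Off the event that `Z` lies within `ε` of some `X_i`, every summand has norm at most `1/ε`, so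
the sum has norm at most `n/ε`. Whatever the law of `X_i`, the probability that `Z` falls in the
disc `B(X_i, ε)` is at most `ε² / R²` with `R = n^C`, so a union bound gives probability at most
`n ε² / R²`. Taking `ε = n^{-(a+1)/2}` makes this `≤ n^{-a}`, with `n/ε = n^{(a+3)/2}`.
-/

open MeasureTheory ProbabilityTheory
open scoped ENNReal

/-- The uniform probability measure on the ball `B(0, r)` in `ℂ`. -/
noncomputable def unifBall (r : ℝ) : Measure ℂ :=
  (MeasureTheory.volume (Metric.ball (0 : ℂ) r))⁻¹ •
    MeasureTheory.volume.restrict (Metric.ball (0 : ℂ) r)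

open Metric

instance (r : ℝ) : SFinite (unifBall r) := by
  unfold unifBall
  infer_instance

lemma unifBall_ball_le {R ε : ℝ} (hR : 0 < R) (hε : 0 ≤ ε) (x : ℂ) :
    unifBall R (ball x ε) ≤ ENNReal.ofReal (ε ^ 2 / R ^ 2) := by
  have hπ : (NNReal.pi : ℝ≥0∞) ≠ 0 := by simp [NNReal.pi_ne_zero]
  calc unifBall R (ball x ε)
      ≤ (volume (ball (0 : ℂ) R))⁻¹ * volume (ball x ε) := by
        rw [unifBall, Measure.smul_apply, smul_eq_mul]
        gcongr
        exact Measure.restrict_le_self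
    _ = ENNReal.ofReal ε ^ 2 * NNReal.pi / (ENNReal.ofReal R ^ 2 * NNReal.pi) := by
        rw [Complex.volume_ball, Complex.volume_ball, ENNReal.div_eq_inv_mul]
    _ = ENNReal.ofReal (ε ^ 2 / R ^ 2) := by
        rw [ENNReal.mul_div_mul_right _ _ hπ ENNReal.coe_ne_top,
          ENNReal.ofReal_div_of_pos (by positivity), ENNReal.ofReal_pow hε, ENNReal.ofReal_pow hR.le]

lemma norm_sum_inv_le_card_div {𝕜 ι : Type*} [NormedDivisionRing 𝕜] (s : Finset ι) {f : ι → 𝕜}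
    {ε : ℝ} (hε : 0 < ε) (h : ∀ i ∈ s, ε ≤ ‖f i‖) :
    ‖∑ i ∈ s, (f i)⁻¹‖ ≤ s.card / ε := by
  calc ‖∑ i ∈ s, (f i)⁻¹‖ ≤ ∑ i ∈ s, ‖(f i)⁻¹‖ := norm_sum_le _ _
    _ ≤ s.card • ε⁻¹ := Finset.sum_le_card_nsmul _ _ _ fun i hi => by
        rw [norm_inv]
        exact inv_anti₀ hε (h i hi)
    _ = s.card / ε := by rw [nsmul_eq_mul, div_eq_mul_inv]

section

variable {Ω : Type*} [MeasurableSpace Ω] (P : Measure Ω) [IsProbabilityMeasure P]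
  {ν : Measure ℂ} [SFinite ν] {ε : ℝ} {δ : ℝ≥0∞}

lemma prod_setOf_norm_sub_lt_le {Y : Ω → ℂ} (hY : Measurable Y) (hν : ∀ x, ν (ball x ε) ≤ δ) :
    P.prod ν {p | ‖p.2 - Y p.1‖ < ε} ≤ δ := by
  have hmeas : MeasurableSet {p : Ω × ℂ | ‖p.2 - Y p.1‖ < ε} :=
    measurableSet_lt (measurable_snd.sub (hY.comp measurable_fst)).norm measurable_const
  rw [Measure.prod_apply hmeas]
  calc ∫⁻ ω, ν (Prod.mk ω ⁻¹' {p | ‖p.2 - Y p.1‖ < ε}) ∂P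
      = ∫⁻ ω, ν (ball (Y ω) ε) ∂P := by
        simp only [Set.preimage_ofPred_eq, ← dist_eq_norm, ← mem_ball]
        rfl
    _ ≤ ∫⁻ _, δ ∂P := lintegral_mono fun ω => hν (Y ω)
    _ = δ := by simp

lemma prod_setOf_card_div_lt_norm_sum_inv_sub_le {ι : Type*} (s : Finset ι) {Y : ι → Ω → ℂ}
    (hY : ∀ i, Measurable (Y i)) (hε : 0 < ε) (hν : ∀ x, ν (ball x ε) ≤ δ) :
    P.prod ν {p | s.card / ε < ‖∑ i ∈ s, (p.2 - Y i p.1)⁻¹‖} ≤ s.card * δ := by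
  have hsub : {p : Ω × ℂ | s.card / ε < ‖∑ i ∈ s, (p.2 - Y i p.1)⁻¹‖}
      ⊆ ⋃ i ∈ s, {p | ‖p.2 - Y i p.1‖ < ε} := by
    intro p hp
    by_contra hfar
    simp only [Set.mem_iUnion, Set.mem_ofPred_eq, not_exists, not_lt] at hp hfar
    exact hp.not_ge (norm_sum_inv_le_card_div s hε hfar)
  calc P.prod ν _ ≤ ∑ i ∈ s, P.prod ν {p | ‖p.2 - Y i p.1‖ < ε} :=
        (measure_mono hsub).trans (measure_biUnion_finset_le _ _)
    _ ≤ s.card • δ :=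
        Finset.sum_le_card_nsmul _ _ _ fun i _ => prod_setOf_norm_sub_lt_le P (hY i) hν
    _ = s.card * δ := nsmul_eq_mul _ _

end

lemma mul_rpow_neg_half_sq_div_le {n D : ℝ} (hn : 0 < n) (hD : 1 ≤ D) (a : ℝ) :
    n * ((n ^ (-(a + 1) / 2)) ^ 2 / D) ≤ n ^ (-a) := by
  calc n * ((n ^ (-(a + 1) / 2)) ^ 2 / D) ≤ n * (n ^ (-(a + 1) / 2)) ^ 2 := by
        gcongr
        exact div_le_self (by positivity) hD
    _ = n ^ (-(a + 1) / 2 * 2 + 1) := by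
        rw [Real.rpow_add_one hn.ne', Real.rpow_mul hn.le, Real.rpow_two, mul_comm]
    _ = n ^ (-a) := by ring_nf

/-- Lemma `crude`, crude upper bound. -/
theorem crude_upper_bound
    {Ω : Type*} [MeasurableSpace Ω] (P : Measure Ω) [IsProbabilityMeasure P]
    (C : ℝ) (hC : 0 < C)
    (X : ℕ → ℕ → Ω → ℂ) (hXm : ∀ n i, Measurable (X n i)) :
    ∀ a > (0:ℝ), ∃ b > (0:ℝ), ∃ K : ℝ, ∀ n : ℕ, 0 < n →
      (P.prod (unifBall ((n : ℝ) ^ C)))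
        {p : Ω × ℂ |
          (n : ℝ) ^ b < ‖∑ i ∈ Finset.range n, (p.2 - X n i p.1)⁻¹‖} ≤
        ENNReal.ofReal (K * (n : ℝ) ^ (-a)) := by
  intro a ha
  refine ⟨(a + 3) / 2, by linarith, 1, fun n hn => ?_⟩
  have hn1 : (1 : ℝ) ≤ n := by exact_mod_cast hn
  have hn0 : (0 : ℝ) < n := by linarith
  set R : ℝ := (n : ℝ) ^ C
  set ε : ℝ := (n : ℝ) ^ (-(a + 1) / 2)
  have hR1 : 1 ≤ R ^ 2 := one_le_pow₀ (Real.one_le_rpow hn1 hC.le)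
  have hnε : (n : ℝ) ^ ((a + 3) / 2) = (Finset.range n).card / ε := by
    rw [Finset.card_range, show (a + 3) / 2 = 1 - (-(a + 1) / 2) by ring, Real.rpow_sub hn0,
      Real.rpow_one]
  rw [hnε]
  calc _ ≤ (Finset.range n).card * ENNReal.ofReal (ε ^ 2 / R ^ 2) :=
        prod_setOf_card_div_lt_norm_sum_inv_sub_le P _ (hXm n) (by positivity)
          (unifBall_ball_le (by positivity) (by positivity))
    _ ≤ ENNReal.ofReal (1 * (n : ℝ) ^ (-a)) := by
        rw [Finset.card_range, ← ENNReal.ofReal_natCast, ← ENNReal.ofReal_mul hn0.le, one_mul]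
        exact ENNReal.ofReal_le_ofReal (mul_rpow_neg_half_sq_div_le hn0 hR1 a)
end
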